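/- arXiv:2104.05687 — 6 statements merged into one kernel-verified Lean document; each statement's English description precedes it below -/
import Mathlib

section
/- Suppose A = Q ∘ R, where R is an invertible n×n complex matrix and Q : ℂⁿ → H is a continuous linear map with Q*Q = Iₙ (a reduced QR factorization of A). Then the matrix R + λ(R*)⁻¹ is invertible and the unique minimizer of F is x* = (R + λ(R*)⁻¹)⁻¹ Q* b. -/
/-!
Completing the square, `F y = F x + ‖A (y - x)‖² + λ‖y - x‖²` whenever `x` solves the normal
equations `A* (A x - b) + λ x = 0`, so such an `x` minimizes `F`, uniquely when `A` is injective.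
For `A = Q R` with `Q* Q = 1` we have `A* A = R* R`, and `R* (R + λ R*⁻¹) = R* R + λ` is positive
definite, so `R + λ R*⁻¹` is invertible and `x* = (R + λ R*⁻¹)⁻¹ Q* b` solves the normal equations.
-/

open ContinuousLinearMap
open scoped Matrix

section RegularizedLeastSquares

variable {𝕜 E F : Type*} [RCLike 𝕜] [NormedAddCommGroup E] [InnerProductSpace 𝕜 E]
  [CompleteSpace E] [NormedAddCommGroup F] [InnerProductSpace 𝕜 F] [CompleteSpace F]

def silrObjective (A : E →L[𝕜] F) (b : F) (lam : ℝ) (x : E) : ℝ :=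
  ‖A x - b‖ ^ 2 + lam * ‖x‖ ^ 2

variable {A : E →L[𝕜] F} {b : F} {lam : ℝ} {x : E}

theorem silrObjective_eq_add_of_normal_eq (hx : adjoint A (A x - b) + (lam : 𝕜) • x = 0)
    (y : E) :
    silrObjective A b lam y =
      silrObjective A b lam x + (‖A (y - x)‖ ^ 2 + lam * ‖y - x‖ ^ 2) := by
  have hcross :
      RCLike.re (inner 𝕜 (A x - b) (A (y - x))) + lam * RCLike.re (inner 𝕜 x (y - x)) = 0 := by
    have h := congrArg (fun v => RCLike.re (inner 𝕜 v (y - x))) hx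
    simpa only [inner_add_left, inner_smul_left, adjoint_inner_left, inner_zero_left,
      RCLike.conj_ofReal, map_add, RCLike.re_ofReal_mul, map_zero] using h
  have hAy : A y - b = (A x - b) + A (y - x) := by rw [map_sub]; abel
  have hy : y = x + (y - x) := by abel
  unfold silrObjective
  rw [hAy, norm_add_sq (𝕜 := 𝕜), hy, norm_add_sq (𝕜 := 𝕜), ← hy]
  linear_combination 2 * hcross

theorem silrObjective_le_of_normal_eq (hlam : 0 ≤ lam)
    (hx : adjoint A (A x - b) + (lam : 𝕜) • x = 0) (y : E) :
    silrObjective A b lam x ≤ silrObjective A b lam y := by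
  rw [silrObjective_eq_add_of_normal_eq hx y]
  have := mul_nonneg hlam (sq_nonneg ‖y - x‖)
  linarith [sq_nonneg ‖A (y - x)‖]

theorem eq_of_silrObjective_le_of_normal_eq (hlam : 0 ≤ lam) (hA : Function.Injective A)
    (hx : adjoint A (A x - b) + (lam : 𝕜) • x = 0) {y : E}
    (hy : silrObjective A b lam y ≤ silrObjective A b lam x) : y = x := by
  rw [silrObjective_eq_add_of_normal_eq hx y] at hy
  have := mul_nonneg hlam (sq_nonneg ‖y - x‖)
  have hAyx : ‖A (y - x)‖ ^ 2 = 0 := by linarith [sq_nonneg ‖A (y - x)‖]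
  rw [sq_eq_zero_iff, norm_eq_zero, map_sub, sub_eq_zero] at hAyx
  exact hA hAyx

theorem leftInverse_adjoint_of_adjoint_comp_self_eq_one {Q : E →L[𝕜] F}
    (hQ : adjoint Q ∘L Q = 1) : Function.LeftInverse (adjoint Q) Q :=
  fun x => by simpa using congrArg (· x) hQ

end RegularizedLeastSquares

section QRFactorization

variable {𝕜 n H : Type*} [RCLike 𝕜] [Fintype n] [DecidableEq n] [NormedAddCommGroup H]
  [InnerProductSpace 𝕜 H] [CompleteSpace H]

theorem Matrix.conjTranspose_mul_add_smul_conjTranspose_inv {R : Matrix n n 𝕜} (hR : IsUnit R)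
    (c : 𝕜) : Rᴴ * (R + c • Rᴴ⁻¹) = Rᴴ * R + c • 1 := by
  have hRH : IsUnit Rᴴ.det := by
    rw [Matrix.det_conjTranspose]; exact ((Matrix.isUnit_iff_isUnit_det R).mp hR).star
  rw [Matrix.mul_add, Matrix.mul_smul, Matrix.mul_nonsing_inv _ hRH]

open scoped ComplexOrder in
theorem Matrix.isUnit_add_smul_conjTranspose_inv {R : Matrix n n 𝕜} (hR : IsUnit R) {lam : ℝ}
    (hlam : 0 ≤ lam) : IsUnit (R + (lam : 𝕜) • Rᴴ⁻¹) := by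
  have hpos : (Rᴴ * R + (lam : 𝕜) • 1).PosDef :=
    (Matrix.PosDef.conjTranspose_mul_self R
      (Matrix.mulVec_injective_iff_isUnit.mpr hR)).add_posSemidef
        (Matrix.PosSemidef.one.smul (RCLike.ofReal_nonneg.mpr hlam))
  have h := (Matrix.isUnit_iff_isUnit_det _).mp hpos.isUnit
  rw [← Matrix.conjTranspose_mul_add_smul_conjTranspose_inv hR, Matrix.det_mul] at h
  exact (Matrix.isUnit_iff_isUnit_det _).mpr (isUnit_of_mul_isUnit_right h)

local notation "toCLM" => Matrix.toEuclideanCLM (n := n) (𝕜 := 𝕜)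

theorem Matrix.adjoint_toEuclideanCLM (R : Matrix n n 𝕜) : adjoint (toCLM R) = toCLM Rᴴ := by
  rw [← star_eq_adjoint, ← map_star, Matrix.star_eq_conjTranspose]

theorem Matrix.injective_toEuclideanCLM {R : Matrix n n 𝕜} (hR : IsUnit R) :
    Function.Injective (toCLM R) := by
  refine Function.LeftInverse.injective (g := toCLM R⁻¹) fun x => ?_
  rw [← mul_apply_eq_comp, ← map_mul, Matrix.nonsing_inv_mul _
    ((Matrix.isUnit_iff_isUnit_det R).mp hR), map_one, one_apply_eq_self]

theorem normal_eq_of_qr {Q : EuclideanSpace 𝕜 n →L[𝕜] H} (hQ : adjoint Q ∘L Q = 1)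
    {R : Matrix n n 𝕜} (hR : IsUnit R) {lam : ℝ} (hS : IsUnit (R + (lam : 𝕜) • Rᴴ⁻¹)) (b : H) :
    adjoint (Q ∘L toCLM R) ((Q ∘L toCLM R) (toCLM (R + (lam : 𝕜) • Rᴴ⁻¹)⁻¹ (adjoint Q b)) - b) +
      (lam : 𝕜) • toCLM (R + (lam : 𝕜) • Rᴴ⁻¹)⁻¹ (adjoint Q b) = 0 := by
  set S := R + (lam : 𝕜) • Rᴴ⁻¹
  set x := toCLM S⁻¹ (adjoint Q b)
  have hb : toCLM Rᴴ (adjoint Q b) = toCLM Rᴴ (toCLM R x) + (lam : 𝕜) • x := by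
    calc toCLM Rᴴ (adjoint Q b)
        = toCLM (Rᴴ * S * S⁻¹) (adjoint Q b) := by
          rw [Matrix.mul_assoc, Matrix.mul_nonsing_inv _ ((Matrix.isUnit_iff_isUnit_det S).mp hS),
            Matrix.mul_one]
      _ = toCLM (Rᴴ * R + (lam : 𝕜) • 1) x := by
          rw [map_mul, mul_apply_eq_comp, Matrix.conjTranspose_mul_add_smul_conjTranspose_inv hR]
      _ = toCLM Rᴴ (toCLM R x) + (lam : 𝕜) • x := by
          rw [map_add, map_smul, map_one, map_mul]; rfl
  rw [adjoint_comp, Matrix.adjoint_toEuclideanCLM, comp_apply, map_sub, comp_apply,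
    leftInverse_adjoint_of_adjoint_comp_self_eq_one hQ _, map_sub, hb]
  abel

end QRFactorization

theorem overdetermined_silr_qr_general
    {n : ℕ} {H : Type*} [NormedAddCommGroup H] [InnerProductSpace ℂ H]
    [CompleteSpace H]
    (Q : EuclideanSpace ℂ (Fin n) →L[ℂ] H) (R : Matrix (Fin n) (Fin n) ℂ)
    (A : EuclideanSpace ℂ (Fin n) →L[ℂ] H) (b : H) (lam : ℝ) (hlam : 0 ≤ lam)
    (hA : A = Q ∘L (Matrix.toEuclideanCLM (𝕜 := ℂ) R))
    (hQ : adjoint Q ∘L Q = 1)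
    (hR : IsUnit R) :
    IsUnit (R + (lam : ℂ) • (R.conjTranspose)⁻¹) ∧
    (∀ y : EuclideanSpace ℂ (Fin n),
        ‖A ((Matrix.toEuclideanCLM (𝕜 := ℂ)
              (R + (lam : ℂ) • (R.conjTranspose)⁻¹)⁻¹) (adjoint Q b)) - b‖ ^ 2
          + lam * ‖(Matrix.toEuclideanCLM (𝕜 := ℂ)
              (R + (lam : ℂ) • (R.conjTranspose)⁻¹)⁻¹) (adjoint Q b)‖ ^ 2
        ≤ ‖A y - b‖ ^ 2 + lam * ‖y‖ ^ 2) ∧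
    (∀ x : EuclideanSpace ℂ (Fin n),
        (∀ y : EuclideanSpace ℂ (Fin n),
            ‖A x - b‖ ^ 2 + lam * ‖x‖ ^ 2 ≤ ‖A y - b‖ ^ 2 + lam * ‖y‖ ^ 2) →
        x = (Matrix.toEuclideanCLM (𝕜 := ℂ)
              (R + (lam : ℂ) • (R.conjTranspose)⁻¹)⁻¹) (adjoint Q b)) := by
  subst hA
  have hS := Matrix.isUnit_add_smul_conjTranspose_inv hR hlam
  have hnormal := normal_eq_of_qr hQ hR hS b
  have hinj := (leftInverse_adjoint_of_adjoint_comp_self_eq_one hQ).injective.comp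
    (Matrix.injective_toEuclideanCLM hR)
  exact ⟨hS, silrObjective_le_of_normal_eq hlam hnormal,
    fun x hx => eq_of_silrObjective_le_of_normal_eq hlam hinj hnormal (hx _)⟩

/-- **Solving overdetermined SILR via a reduced QR factorization.**
Let `H` be a complex Hilbert space, `b ∈ H`, `λ ≥ 0`.  Suppose the tall
quasimatrix is `A = Q ∘ R` with `R` an invertible `n × n` complex matrix and
`Q : ℂⁿ → H` a continuous linear map with `Q*Q = Iₙ`, and assume `λ > 0` or `A`
is injective.  Then the matrix `R + λ (R*)⁻¹` is invertible and
`x* = (R + λ(R*)⁻¹)⁻¹ Q* b` is the unique minimizer of the SILR objective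
`F(x) = ‖Ax − b‖² + λ‖x‖²`. -/
theorem overdetermined_silr_qr
    {n : ℕ} {H : Type*} [NormedAddCommGroup H] [InnerProductSpace ℂ H]
    [CompleteSpace H]
    (Q : EuclideanSpace ℂ (Fin n) →L[ℂ] H) (R : Matrix (Fin n) (Fin n) ℂ)
    (A : EuclideanSpace ℂ (Fin n) →L[ℂ] H) (b : H) (lam : ℝ) (hlam : 0 ≤ lam)
    (hA : A = Q ∘L (Matrix.toEuclideanCLM (𝕜 := ℂ) R))
    (hQ : adjoint Q ∘L Q = 1)
    (hR : IsUnit R)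
    (hreg : 0 < lam ∨ Function.Injective A) :
    IsUnit (R + (lam : ℂ) • (R.conjTranspose)⁻¹) ∧
    (∀ y : EuclideanSpace ℂ (Fin n),
        ‖A ((Matrix.toEuclideanCLM (𝕜 := ℂ)
              (R + (lam : ℂ) • (R.conjTranspose)⁻¹)⁻¹) (adjoint Q b)) - b‖ ^ 2
          + lam * ‖(Matrix.toEuclideanCLM (𝕜 := ℂ)
              (R + (lam : ℂ) • (R.conjTranspose)⁻¹)⁻¹) (adjoint Q b)‖ ^ 2
        ≤ ‖A y - b‖ ^ 2 + lam * ‖y‖ ^ 2) ∧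
    (∀ x : EuclideanSpace ℂ (Fin n),
        (∀ y : EuclideanSpace ℂ (Fin n),
            ‖A x - b‖ ^ 2 + lam * ‖x‖ ^ 2 ≤ ‖A y - b‖ ^ 2 + lam * ‖y‖ ^ 2) →
        x = (Matrix.toEuclideanCLM (𝕜 := ℂ)
              (R + (lam : ℂ) • (R.conjTranspose)⁻¹)⁻¹) (adjoint Q b)) :=
  overdetermined_silr_qr_general Q R A b lam hlam hA hQ hR
end

section
/- Suppose A = Q_A ∘ R_A with Q_A : ℂⁿ → H satisfying Q_A*Q_A = Iₙ and R_A an n×n matrix, and suppose the 2n×n matrix C = [R_A; √λ Iₙ] factors as C = Q_C R_C with Q_C a 2n×n matrix satisfying Q_C*Q_C = Iₙ and R_C an n×n invertible matrix; write Q_{C,1} for the top n rows of Q_C and Q_{C,2} for the bottom n rows. Then: (i) (Q_A Q_{C,1})*(Q_A Q_{C,1}) + Q_{C,2}*Q_{C,2} = Iₙ, so that x ↦ (Q_A Q_{C,1} x, Q_{C,2} x) is an isometry from ℂⁿ into H × ℂⁿ; and (ii) the unique minimizer x* of F satisfies the triangular system R_C x* = Q_{C,1}* Q_A* b. -/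
/-!
Since `Q_C` has orthonormal columns, splitting `Q_C* Q_C = I` into its two row blocks gives (i),
and `R_C* R_C = C* C = R_A* R_A + λ I`. Together with the top block `Q_{C,1} R_C = R_A` of
`C = Q_C R_C` this completes the square:
`F(x) = ‖R_C x - v‖² + ‖b‖² - ‖v‖²` with `v = Q_{C,1}* Q_A* b`. As `R_C` is invertible the first
term vanishes somewhere, hence at every minimizer.
-/

open ContinuousLinearMap Matrix

open scoped InnerProductSpace

namespace Matrix

lemma conjTranspose_fromRows_mul_fromRows {R m₁ m₂ n p : Type*} [Fintype m₁] [Fintype m₂]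
    [Semiring R] [StarRing R] (A₁ : Matrix m₁ n R) (A₂ : Matrix m₂ n R)
    (B₁ : Matrix m₁ p R) (B₂ : Matrix m₂ p R) :
    (fromRows A₁ A₂)ᴴ * fromRows B₁ B₂ = A₁ᴴ * B₁ + A₂ᴴ * B₂ := by
  rw [conjTranspose_fromRows_eq_fromCols_conjTranspose]
  exact fromCols_mul_fromRows _ _ _ _

variable {𝕜 n : Type*} [RCLike 𝕜] [Fintype n] [DecidableEq n]

lemma adjoint_toEuclideanCLM_s3 (M : Matrix n n 𝕜) :
    adjoint (toEuclideanCLM (𝕜 := 𝕜) M) = toEuclideanCLM (𝕜 := 𝕜) Mᴴ := by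
  rw [← star_eq_adjoint, ← map_star, star_eq_conjTranspose]

lemma norm_toEuclideanCLM_sq (M : Matrix n n 𝕜) (x : EuclideanSpace 𝕜 n) :
    ‖toEuclideanCLM (𝕜 := 𝕜) M x‖ ^ 2 = RCLike.re ⟪x, toEuclideanCLM (𝕜 := 𝕜) (Mᴴ * M) x⟫_𝕜 := by
  rw [map_mul, mul_apply_eq_comp, ← adjoint_toEuclideanCLM_s3, adjoint_inner_right,
    ← @inner_self_eq_norm_sq 𝕜]

lemma norm_toEuclideanCLM_sq_add_norm_sq {M N P : Matrix n n 𝕜} (h : Mᴴ * M + Nᴴ * N = Pᴴ * P)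
    (x : EuclideanSpace 𝕜 n) :
    ‖toEuclideanCLM (𝕜 := 𝕜) M x‖ ^ 2 + ‖toEuclideanCLM (𝕜 := 𝕜) N x‖ ^ 2 =
      ‖toEuclideanCLM (𝕜 := 𝕜) P x‖ ^ 2 := by
  simp only [norm_toEuclideanCLM_sq, ← h, map_add, _root_.add_apply, inner_add_right]

end Matrix

lemma apply_eq_of_forall_norm_sub_sq_add_le {𝕜 E F G : Type*} [RCLike 𝕜]
    [NormedAddCommGroup F] [InnerProductSpace 𝕜 F] [NormedAddCommGroup G] [InnerProductSpace 𝕜 G]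
    {f : E → F} {g : E → G} {c : E → ℝ} {b : F} {v : G}
    (hnorm : ∀ x, ‖g x‖ ^ 2 = ‖f x‖ ^ 2 + c x)
    (hinner : ∀ x, RCLike.re ⟪g x, v⟫_𝕜 = RCLike.re ⟪f x, b⟫_𝕜)
    (hv : v ∈ Set.range g) {xstar : E}
    (hmin : ∀ y, ‖f xstar - b‖ ^ 2 + c xstar ≤ ‖f y - b‖ ^ 2 + c y) :
    g xstar = v := by
  have hsquare (x : E) : ‖f x - b‖ ^ 2 + c x = ‖g x - v‖ ^ 2 + (‖b‖ ^ 2 - ‖v‖ ^ 2) := by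
    rw [@norm_sub_sq 𝕜, @norm_sub_sq 𝕜, hnorm, hinner]
    ring
  obtain ⟨x₀, hx₀⟩ := hv
  have hle := hmin x₀
  rw [hsquare, hsquare, hx₀, sub_self, norm_zero] at hle
  rw [← sub_eq_zero, ← norm_eq_zero, ← pow_eq_zero_iff two_ne_zero]
  linarith [sq_nonneg ‖g xstar - v‖]

/-- **Ridge-regularized SILR via an augmented QR factorization.**
Let `H` be a complex Hilbert space, `b ∈ H`, `λ > 0`.  Suppose `A = Q_A ∘ R_A`
with `Q_A : ℂⁿ → H` satisfying `Q_A*Q_A = Iₙ` and `R_A` an `n × n` matrix, and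
suppose the `2n × n` matrix `C = [R_A; √λ Iₙ]` factors as `C = Q_C R_C` with
`Q_C* Q_C = Iₙ` and `R_C` invertible; `Q_{C,1}` and `Q_{C,2}` denote the top
and bottom `n` rows of `Q_C`.  Then
(i) `(Q_A Q_{C,1})*(Q_A Q_{C,1}) + Q_{C,2}*Q_{C,2} = Iₙ`, so that
`x ↦ (Q_A Q_{C,1} x, Q_{C,2} x)` is an isometry of `ℂⁿ` into `H × ℂⁿ`
(`‖Q_A(Q_{C,1}x)‖² + ‖Q_{C,2}x‖² = ‖x‖²`); and
(ii) the minimizer `x*` of `F(x) = ‖Ax − b‖² + λ‖x‖²` satisfies the triangular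
system `R_C x* = Q_{C,1}* Q_A* b`. -/
theorem overdetermined_silr_augmented_qr
    {n : ℕ} {H : Type*} [NormedAddCommGroup H] [InnerProductSpace ℂ H]
    [CompleteSpace H]
    (QA : EuclideanSpace ℂ (Fin n) →L[ℂ] H) (RA : Matrix (Fin n) (Fin n) ℂ)
    (QC : Matrix (Fin n ⊕ Fin n) (Fin n) ℂ) (RC : Matrix (Fin n) (Fin n) ℂ)
    (A : EuclideanSpace ℂ (Fin n) →L[ℂ] H) (b : H) (lam : ℝ) (hlam : 0 < lam)
    (hA : A = QA ∘L (Matrix.toEuclideanCLM (𝕜 := ℂ) RA))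
    (hQA : adjoint QA ∘L QA = 1)
    (hC : Matrix.fromRows RA
        (((Real.sqrt lam : ℂ)) • (1 : Matrix (Fin n) (Fin n) ℂ)) = QC * RC)
    (hQC : QC.conjTranspose * QC = 1)
    (hRC : IsUnit RC) :
    ((QC.submatrix Sum.inl id).conjTranspose * (QC.submatrix Sum.inl id) +
        (QC.submatrix Sum.inr id).conjTranspose * (QC.submatrix Sum.inr id) = 1) ∧
    (∀ x : EuclideanSpace ℂ (Fin n),
        ‖QA ((Matrix.toEuclideanCLM (𝕜 := ℂ) (QC.submatrix Sum.inl id)) x)‖ ^ 2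
          + ‖(Matrix.toEuclideanCLM (𝕜 := ℂ) (QC.submatrix Sum.inr id)) x‖ ^ 2
          = ‖x‖ ^ 2) ∧
    (∀ xstar : EuclideanSpace ℂ (Fin n),
        (∀ y : EuclideanSpace ℂ (Fin n),
            ‖A xstar - b‖ ^ 2 + lam * ‖xstar‖ ^ 2
              ≤ ‖A y - b‖ ^ 2 + lam * ‖y‖ ^ 2) →
        (Matrix.toEuclideanCLM (𝕜 := ℂ) RC) xstar =
          (Matrix.toEuclideanCLM (𝕜 := ℂ)
            (QC.submatrix Sum.inl id).conjTranspose) (adjoint QA b)) := by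
  set Q₁ := QC.submatrix Sum.inl id
  set Q₂ := QC.submatrix Sum.inr id
  have hsplit : QC = fromRows Q₁ Q₂ := (fromRows_toRows QC).symm
  have hQA_norm : ∀ y, ‖QA y‖ = ‖y‖ := QA.norm_map_iff_adjoint_comp_self.mpr hQA
  have hgram : Q₁ᴴ * Q₁ + Q₂ᴴ * Q₂ = 1 := by
    rw [hsplit, conjTranspose_fromRows_mul_fromRows] at hQC
    exact hQC
  refine ⟨hgram, fun x => ?_, fun xstar hmin => ?_⟩
  · rw [hQA_norm]
    have hgram' : Q₁ᴴ * Q₁ + Q₂ᴴ * Q₂ = 1ᴴ * 1 := by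
      rw [hgram, conjTranspose_one, Matrix.mul_one]
    rw [norm_toEuclideanCLM_sq_add_norm_sq hgram', map_one, one_apply_eq_self]
  have hgramC : RAᴴ * RA + ((Real.sqrt lam : ℂ) • 1)ᴴ * ((Real.sqrt lam : ℂ) • 1) = RCᴴ * RC := by
    rw [← conjTranspose_fromRows_mul_fromRows, hC, conjTranspose_mul,
      Matrix.mul_assoc, ← Matrix.mul_assoc QCᴴ, hQC, Matrix.one_mul]
  have htop : Q₁ * RC = RA := by
    rw [hsplit, fromRows_mul] at hC
    exact (fromRows_inj hC).1.symm
  refine apply_eq_of_forall_norm_sub_sq_add_le (𝕜 := ℂ) (c := fun x => lam * ‖x‖ ^ 2)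
    (fun x => ?_) (fun x => ?_) ?_ hmin
  · rw [← norm_toEuclideanCLM_sq_add_norm_sq hgramC, hA, ContinuousLinearMap.comp_apply,
      hQA_norm, map_smul, map_one, _root_.smul_apply, one_apply_eq_self, norm_smul, mul_pow,
      Complex.norm_real, Real.norm_eq_abs, sq_abs, Real.sq_sqrt hlam.le]
  · congr 1
    calc ⟪toEuclideanCLM (𝕜 := ℂ) RC x, toEuclideanCLM (𝕜 := ℂ) Q₁ᴴ (adjoint QA b)⟫_ℂ
        = ⟪x, toEuclideanCLM (𝕜 := ℂ) (Q₁ * RC)ᴴ (adjoint QA b)⟫_ℂ := by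
          rw [← adjoint_inner_right, adjoint_toEuclideanCLM_s3, ← mul_apply_eq_comp, ← map_mul,
            conjTranspose_mul]
      _ = ⟪A x, b⟫_ℂ := by
          rw [htop, ← adjoint_toEuclideanCLM_s3, adjoint_inner_right, adjoint_inner_right, hA,
            ContinuousLinearMap.comp_apply]
  · exact (ContinuousLinearMap.isUnit_iff_bijective.mp (hRC.map _)).2 _
end

section
/- Let f(y) = (1/2)⟨y, (K + λIₙ)y⟩ − Re⟨y, b⟩ for y ∈ ℂⁿ, let y* = (K + λIₙ)⁻¹b be its minimizer, and let x* = A*y*. If ỹ ∈ ℂⁿ satisfies f(ỹ) ≤ f(y*) + ε for some ε ≥ 0, then the vector x̃ = A*ỹ satisfies ‖x̃ − x*‖_H² ≤ (2 λ_max(K) / (λ_min(K) + λ)) · ε, where λ_max(K) and λ_min(K) are the largest and smallest eigenvalues of K. -/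
/-!
Write `M = K + λI`. Because `M` is symmetric and `M y* = b`, the cross terms cancel in the
expansion of `f (y* + d)`, so the suboptimality gap is exactly the quadratic form
`f ỹ - f y* = ½ Re⟨d, M d⟩` with `d = ỹ - y*`. Coercivity of `M` with constant `λmin + λ`
bounds `‖d‖²` by `2ε / (λmin + λ)`, and `‖A* d‖² = Re⟨d, K d⟩ ≤ λmax ‖d‖²` finishes the proof.
-/

open ContinuousLinearMap RCLike

open scoped InnerProductSpace

section QuadraticObjective

variable {𝕜 E : Type*} [RCLike 𝕜] [NormedAddCommGroup E] [InnerProductSpace 𝕜 E]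

noncomputable def quadraticObjective (M : E →ₗ[𝕜] E) (b y : E) : ℝ :=
  1 / 2 * re ⟪y, M y⟫_𝕜 - re ⟪y, b⟫_𝕜

variable {M : E →ₗ[𝕜] E} {b y₀ : E}

theorem quadraticObjective_sub_of_apply_eq (hM : M.IsSymmetric) (hy₀ : M y₀ = b) (y : E) :
    quadraticObjective M b y - quadraticObjective M b y₀ =
      1 / 2 * re ⟪y - y₀, M (y - y₀)⟫_𝕜 := by
  obtain ⟨d, rfl⟩ : ∃ d, y = y₀ + d := ⟨y - y₀, by abel⟩
  have hcross : re ⟪y₀, M d⟫_𝕜 = re ⟪d, b⟫_𝕜 := by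
    rw [← hM, hy₀, ← inner_conj_symm, conj_re]
  simp only [quadraticObjective, add_sub_cancel_left, map_add, inner_add_left, inner_add_right]
  rw [hcross, hy₀]
  ring

theorem sq_norm_sub_le_of_quadraticObjective_le (hM : M.IsSymmetric) {μ : ℝ} (hμ : 0 < μ)
    (hcoer : ∀ y, μ * ‖y‖ ^ 2 ≤ re ⟪y, M y⟫_𝕜) (hy₀ : M y₀ = b) {y : E} {ε : ℝ}
    (hy : quadraticObjective M b y ≤ quadraticObjective M b y₀ + ε) :
    ‖y - y₀‖ ^ 2 ≤ 2 * ε / μ := by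
  have hgap := quadraticObjective_sub_of_apply_eq hM hy₀ y
  rw [le_div_iff₀ hμ]
  linarith [hcoer (y - y₀)]

theorem re_inner_add_ofReal_smul_id_apply (T : E →ₗ[𝕜] E) (c : ℝ) (y : E) :
    re ⟪y, (T + (c : 𝕜) • LinearMap.id : E →ₗ[𝕜] E) y⟫_𝕜 = re ⟪y, T y⟫_𝕜 + c * ‖y‖ ^ 2 := by
  rw [LinearMap.add_apply, LinearMap.smul_apply, LinearMap.id_apply, inner_add_right,
    inner_smul_right, map_add, re_ofReal_mul, inner_self_eq_norm_sq]

end QuadraticObjective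

/-- If the best constant were negative, every vector would have norm zero, and then every real
would be such a constant. -/
theorem nonneg_of_isLeast_quadratic_bound {E : Type*} [Norm E] {q : E → ℝ} (hq : ∀ y, 0 ≤ q y)
    {c : ℝ} (hc : IsLeast {c : ℝ | ∀ y, q y ≤ c * ‖y‖ ^ 2} c) : 0 ≤ c := by
  by_contra! hneg
  have hmem : c - 1 ∈ {c : ℝ | ∀ y, q y ≤ c * ‖y‖ ^ 2} := fun y => by
    nlinarith [hc.1 y, hq y, sq_nonneg ‖y‖]
  linarith [hc.2 hmem]

theorem underdetermined_silr_suboptimality_general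
    {n : ℕ} {H : Type*} [NormedAddCommGroup H]
    [InnerProductSpace ℂ H] [CompleteSpace H]
    (A : H →L[ℂ] EuclideanSpace ℂ (Fin n)) (b : EuclideanSpace ℂ (Fin n))
    (lam lamMin lamMax : ℝ)
    (hmin : IsGreatest {c : ℝ | ∀ y : EuclideanSpace ℂ (Fin n),
        c * ‖y‖ ^ 2 ≤ (inner (𝕜 := ℂ) y ((A ∘L adjoint A) y)).re} lamMin)
    (hmax : IsLeast {c : ℝ | ∀ y : EuclideanSpace ℂ (Fin n),
        (inner (𝕜 := ℂ) y ((A ∘L adjoint A) y)).re ≤ c * ‖y‖ ^ 2} lamMax)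
    (hpos : 0 < lamMin + lam)
    (f : EuclideanSpace ℂ (Fin n) → ℝ)
    (hf : ∀ y : EuclideanSpace ℂ (Fin n),
        f y = (1 / 2) * (inner (𝕜 := ℂ) y ((A ∘L adjoint A) y + (lam : ℂ) • y)).re
          - (inner (𝕜 := ℂ) y b).re)
    (ystar : EuclideanSpace ℂ (Fin n))
    (hystar : (A ∘L adjoint A) ystar + (lam : ℂ) • ystar = b)
    (ytil : EuclideanSpace ℂ (Fin n)) (ε : ℝ)
    (happrox : f ytil ≤ f ystar + ε) :
    ‖adjoint A ytil - adjoint A ystar‖ ^ 2 ≤ (2 * lamMax / (lamMin + lam)) * ε := by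
  set K := A ∘L adjoint A
  have hK : ∀ y, (⟪y, K y⟫_ℂ).re = ‖adjoint A y‖ ^ 2 := fun y => by
    rw [apply_norm_sq_eq_inner_adjoint_right, adjoint_adjoint]; rfl
  let M := K.toLinearMap + (lam : ℂ) • LinearMap.id
  have hM : M.IsSymmetric := (isPositive_self_comp_adjoint A).isSymmetric.add
    (LinearMap.IsSymmetric.id.smul (conj_ofReal lam))
  have hcoer : ∀ y, (lamMin + lam) * ‖y‖ ^ 2 ≤ re ⟪y, M y⟫_ℂ := fun y =>
    calc (lamMin + lam) * ‖y‖ ^ 2 ≤ re ⟪y, K y⟫_ℂ + lam * ‖y‖ ^ 2 := by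
          rw [re_to_complex]; linarith [hmin.1 y]
      _ = re ⟪y, M y⟫_ℂ := (re_inner_add_ofReal_smul_id_apply K.toLinearMap lam y).symm
  have hdist : ‖ytil - ystar‖ ^ 2 ≤ 2 * ε / (lamMin + lam) :=
    sq_norm_sub_le_of_quadraticObjective_le hM hpos hcoer hystar (by rwa [hf, hf] at happrox)
  have hlamMax : 0 ≤ lamMax :=
    nonneg_of_isLeast_quadratic_bound (fun y => by rw [hK]; positivity) hmax
  calc ‖adjoint A ytil - adjoint A ystar‖ ^ 2 = ‖adjoint A (ytil - ystar)‖ ^ 2 := by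
        rw [map_sub]
    _ ≤ lamMax * ‖ytil - ystar‖ ^ 2 := hK (ytil - ystar) ▸ hmax.1 _
    _ ≤ lamMax * (2 * ε / (lamMin + lam)) := by gcongr
    _ = 2 * lamMax / (lamMin + lam) * ε := by ring

/-- **Approximate solutions of underdetermined SILR via the dual quadratic.**
Let `H` be a complex Hilbert space, `A : H → ℂⁿ` a continuous linear map (a
wide quasimatrix), `b ∈ ℂⁿ`, `λ ≥ 0`, and `K = A A*`.  Let `λmin` and `λmax` be
the smallest and largest eigenvalues of the positive semidefinite Hermitian
matrix `K`, characterized as the greatest lower and least upper bounds of the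
quadratic form `y ↦ Re⟨y, Ky⟩` relative to `‖y‖²`, and assume `λmin + λ > 0`.
Let `f(y) = (1/2)⟨y, (K+λI)y⟩ − Re⟨y, b⟩`, let `y* = (K+λI)⁻¹ b` (the
minimizer of `f`, defined by `(K+λI)y* = b`), and `x* = A* y*`.  If `ỹ`
satisfies `f(ỹ) ≤ f(y*) + ε` with `ε ≥ 0`, then `x̃ = A* ỹ` satisfies
`‖x̃ − x*‖² ≤ (2 λmax / (λmin + λ)) ε`. -/
theorem underdetermined_silr_suboptimality
    {n : ℕ} (hn : 0 < n) {H : Type*} [NormedAddCommGroup H]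
    [InnerProductSpace ℂ H] [CompleteSpace H]
    (A : H →L[ℂ] EuclideanSpace ℂ (Fin n)) (b : EuclideanSpace ℂ (Fin n))
    (lam lamMin lamMax : ℝ) (hlam : 0 ≤ lam)
    (hmin : IsGreatest {c : ℝ | ∀ y : EuclideanSpace ℂ (Fin n),
        c * ‖y‖ ^ 2 ≤ (inner (𝕜 := ℂ) y ((A ∘L adjoint A) y)).re} lamMin)
    (hmax : IsLeast {c : ℝ | ∀ y : EuclideanSpace ℂ (Fin n),
        (inner (𝕜 := ℂ) y ((A ∘L adjoint A) y)).re ≤ c * ‖y‖ ^ 2} lamMax)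
    (hpos : 0 < lamMin + lam)
    (f : EuclideanSpace ℂ (Fin n) → ℝ)
    (hf : ∀ y : EuclideanSpace ℂ (Fin n),
        f y = (1 / 2) * (inner (𝕜 := ℂ) y ((A ∘L adjoint A) y + (lam : ℂ) • y)).re
          - (inner (𝕜 := ℂ) y b).re)
    (ystar : EuclideanSpace ℂ (Fin n))
    (hystar : (A ∘L adjoint A) ystar + (lam : ℂ) • ystar = b)
    (ytil : EuclideanSpace ℂ (Fin n)) (ε : ℝ) (hε : 0 ≤ ε)
    (happrox : f ytil ≤ f ystar + ε) :
    ‖adjoint A ytil - adjoint A ystar‖ ^ 2 ≤ (2 * lamMax / (lamMin + lam)) * ε :=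
  underdetermined_silr_suboptimality_general A b lam lamMin lamMax hmin hmax hpos f hf ystar hystar
    ytil ε happrox
end

section
/- Let x* minimize F and assume (F(x*))/2 ≥ λ. Suppose A_η ∈ ℂ^{s×n} and b_η ∈ ℂ^s satisfy, for all x ∈ ℂⁿ, (1−ε)(F(x) + λ) ≤ ‖A_η x − b_η‖₂² + λ‖x‖₂² + λ ≤ (1+ε)(F(x) + λ), where 0 < ε < 1. Then any minimizer x̃ over ℂⁿ of G(x) = ‖A_η x − b_η‖₂² + λ‖x‖₂² satisfies F(x̃) ≤ ((1+2ε)/(1−ε)) F(x*). -/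
/-! Chaining the sandwich at `x̃`, the minimality of `x̃` for `G` and the sandwich at `x*` gives
`(1 - ε)(F(x̃) + λ) ≤ (1 + ε)(F(x*) + λ)`, i.e. `(1 - ε) F(x̃) ≤ (1 + ε) F(x*) + 2ελ`;
the assumption `λ ≤ F(x*)/2` absorbs the shift `2ελ` into `ε F(x*)`. -/

open ContinuousLinearMap

section RelativeError

variable {X : Type*} (F G : X → ℝ) {c ε : ℝ} {x y : X}

theorem mul_le_of_shifted_relative_error (hGxy : G x ≤ G y)
    (hlow : (1 - ε) * (F x + c) ≤ G x + c) (hup : G y + c ≤ (1 + ε) * (F y + c)) :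
    (1 - ε) * F x ≤ (1 + ε) * F y + 2 * ε * c := by
  linarith

theorem le_mul_of_shifted_relative_error (hε0 : 0 ≤ ε) (hε1 : ε < 1) (hc : c ≤ F y / 2)
    (hGxy : G x ≤ G y)
    (hlow : (1 - ε) * (F x + c) ≤ G x + c) (hup : G y + c ≤ (1 + ε) * (F y + c)) :
    F x ≤ (1 + 2 * ε) / (1 - ε) * F y := by
  have hshift : 2 * ε * c ≤ ε * F y := by nlinarith
  rw [div_mul_eq_mul_div, le_div_iff₀ (by linarith)]
  linarith [mul_le_of_shifted_relative_error F G hGxy hlow hup]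

end RelativeError

theorem sampled_silr_quality_general
    {n s : ℕ} {H : Type*} [NormedAddCommGroup H] [InnerProductSpace ℂ H]
    (A : EuclideanSpace ℂ (Fin n) →L[ℂ] H) (b : H) (lam : ℝ)
    (Aη : Matrix (Fin s) (Fin n) ℂ) (bη : EuclideanSpace ℂ (Fin s))
    (ε : ℝ) (hε0 : 0 < ε) (hε1 : ε < 1)
    (xstar : EuclideanSpace ℂ (Fin n))
    (hbig : lam ≤ (‖A xstar - b‖ ^ 2 + lam * ‖xstar‖ ^ 2) / 2)
    (hsandwich : ∀ x : EuclideanSpace ℂ (Fin n),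
        (1 - ε) * (‖A x - b‖ ^ 2 + lam * ‖x‖ ^ 2 + lam)
          ≤ ‖Matrix.toEuclideanLin (𝕜 := ℂ) Aη x - bη‖ ^ 2 + lam * ‖x‖ ^ 2 + lam ∧
        ‖Matrix.toEuclideanLin (𝕜 := ℂ) Aη x - bη‖ ^ 2 + lam * ‖x‖ ^ 2 + lam
          ≤ (1 + ε) * (‖A x - b‖ ^ 2 + lam * ‖x‖ ^ 2 + lam))
    (xtil : EuclideanSpace ℂ (Fin n))
    (hxtil : ∀ y : EuclideanSpace ℂ (Fin n),
        ‖Matrix.toEuclideanLin (𝕜 := ℂ) Aη xtil - bη‖ ^ 2 + lam * ‖xtil‖ ^ 2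
          ≤ ‖Matrix.toEuclideanLin (𝕜 := ℂ) Aη y - bη‖ ^ 2 + lam * ‖y‖ ^ 2) :
    ‖A xtil - b‖ ^ 2 + lam * ‖xtil‖ ^ 2
      ≤ ((1 + 2 * ε) / (1 - ε)) * (‖A xstar - b‖ ^ 2 + lam * ‖xstar‖ ^ 2) :=
  le_mul_of_shifted_relative_error (fun x => ‖A x - b‖ ^ 2 + lam * ‖x‖ ^ 2)
    (fun x => ‖Matrix.toEuclideanLin (𝕜 := ℂ) Aη x - bη‖ ^ 2 + lam * ‖x‖ ^ 2)
    hε0.le hε1 hbig (hxtil xstar) (hsandwich xtil).1 (hsandwich xstar).2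

/-- **Quality of the solution of a sampled SILR problem (Proposition 5.1).**
Let `H` be a complex Hilbert space, `A : ℂⁿ → H` a continuous linear map,
`b ∈ H`, `λ ≥ 0` (with `A` injective if `λ = 0`), and
`F(x) = ‖Ax − b‖² + λ‖x‖²` with minimizer `x*` satisfying `F(x*)/2 ≥ λ`.
Suppose `A_η ∈ ℂ^{s×n}` and `b_η ∈ ℂˢ` satisfy, for all `x ∈ ℂⁿ` and some
`0 < ε < 1`,
`(1−ε)(F(x)+λ) ≤ ‖A_η x − b_η‖² + λ‖x‖² + λ ≤ (1+ε)(F(x)+λ)`.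
Then any minimizer `x̃` of `G(x) = ‖A_η x − b_η‖² + λ‖x‖²` satisfies
`F(x̃) ≤ ((1+2ε)/(1−ε)) F(x*)`. -/
theorem sampled_silr_quality
    {n s : ℕ} {H : Type*} [NormedAddCommGroup H] [InnerProductSpace ℂ H]
    [CompleteSpace H]
    (A : EuclideanSpace ℂ (Fin n) →L[ℂ] H) (b : H) (lam : ℝ) (hlam : 0 ≤ lam)
    (hreg : 0 < lam ∨ Function.Injective A)
    (Aη : Matrix (Fin s) (Fin n) ℂ) (bη : EuclideanSpace ℂ (Fin s))
    (ε : ℝ) (hε0 : 0 < ε) (hε1 : ε < 1)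
    (xstar : EuclideanSpace ℂ (Fin n))
    (hxstar : ∀ y : EuclideanSpace ℂ (Fin n),
        ‖A xstar - b‖ ^ 2 + lam * ‖xstar‖ ^ 2 ≤ ‖A y - b‖ ^ 2 + lam * ‖y‖ ^ 2)
    (hbig : lam ≤ (‖A xstar - b‖ ^ 2 + lam * ‖xstar‖ ^ 2) / 2)
    (hsandwich : ∀ x : EuclideanSpace ℂ (Fin n),
        (1 - ε) * (‖A x - b‖ ^ 2 + lam * ‖x‖ ^ 2 + lam)
          ≤ ‖Matrix.toEuclideanLin (𝕜 := ℂ) Aη x - bη‖ ^ 2 + lam * ‖x‖ ^ 2 + lam ∧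
        ‖Matrix.toEuclideanLin (𝕜 := ℂ) Aη x - bη‖ ^ 2 + lam * ‖x‖ ^ 2 + lam
          ≤ (1 + ε) * (‖A x - b‖ ^ 2 + lam * ‖x‖ ^ 2 + lam))
    (xtil : EuclideanSpace ℂ (Fin n))
    (hxtil : ∀ y : EuclideanSpace ℂ (Fin n),
        ‖Matrix.toEuclideanLin (𝕜 := ℂ) Aη xtil - bη‖ ^ 2 + lam * ‖xtil‖ ^ 2
          ≤ ‖Matrix.toEuclideanLin (𝕜 := ℂ) Aη y - bη‖ ^ 2 + lam * ‖y‖ ^ 2) :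
    ‖A xtil - b‖ ^ 2 + lam * ‖xtil‖ ^ 2
      ≤ ((1 + 2 * ε) / (1 - ε)) * (‖A xstar - b‖ ^ 2 + lam * ‖xstar‖ ^ 2) :=
  sampled_silr_quality_general A b lam Aη bη ε hε0 hε1 xstar hbig hsandwich xtil hxtil
end

section
/- ∫_Ω ‖∇f_η(x) − ∇f_η(x*)‖² dμ(η) ≤ 2 L_sup (f(x) − f(x*)) for every x ∈ ℝⁿ. -/
/-!
Tilting a convex `g` with `L`-Lipschitz gradient by its gradient at `y` gives a convex function
minimized at `y`; since one gradient step of length `1 / L` from `x` cannot go below that minimum,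
the descent lemma yields co-coercivity `‖∇g x - ∇g y‖² ≤ 2L (g x - g y - ⟪∇g y, x - y⟫)`.
Apply it to each `f_η` at `(x, x*)` and integrate over `η`: the linear term integrates to
`⟪∇f x*, x - x*⟫ = 0` because `x*` minimizes `f`.
-/

open MeasureTheory Set
open scoped RealInnerProductSpace Gradient

section LipschitzGradient

variable {E : Type*} [NormedAddCommGroup E] [InnerProductSpace ℝ E] [CompleteSpace E]
  {g : E → ℝ} {G : E → E}

theorem HasGradientAt.hasDerivAt_comp_add_smul {g' x v : E} {t : ℝ}
    (h : HasGradientAt g g' (x + t • v)) :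
    HasDerivAt (fun s : ℝ => g (x + s • v)) ⟪g', v⟫ t := by
  have hline : HasDerivAt (fun s : ℝ => x + s • v) v t := by
    simpa using ((hasDerivAt_id t).smul_const v).const_add x
  simpa [Function.comp_def] using h.hasFDerivAt.comp_hasDerivAt t hline

theorem ConvexOn.add_inner_le_of_hasGradientAt (hg : ConvexOn ℝ univ g) {g' x : E}
    (hx : HasGradientAt g g' x) (y : E) :
    g x + ⟪g', y - x⟫ ≤ g y := by
  have hline : ConvexOn ℝ univ fun t : ℝ => g (x + t • (y - x)) := by
    simpa [Function.comp_def, AffineMap.lineMap_apply, add_comm] using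
      hg.comp_affineMap (AffineMap.lineMap x y : ℝ →ᵃ[ℝ] E)
  have hd : HasDerivAt (fun t : ℝ => g (x + t • (y - x))) ⟪g', y - x⟫ 0 :=
    HasGradientAt.hasDerivAt_comp_add_smul (by simpa using hx)
  have hslope := hline.le_slope_of_hasDerivAt (mem_univ 0) (mem_univ 1) zero_lt_one hd
  simp only [slope_def_field, zero_smul, add_zero, one_smul, add_sub_cancel] at hslope
  linarith

theorem LipschitzWith.image_add_le_of_hasGradientAt {L : NNReal} (hL : LipschitzWith L G)
    (hG : ∀ z, HasGradientAt g (G z) z) (x v : E) :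
    g (x + v) ≤ g x + ⟪G x, v⟫ + L / 2 * ‖v‖ ^ 2 := by
  set ψ : ℝ → ℝ := fun t => t * ⟪G x, v⟫ + L / 2 * t ^ 2 * ‖v‖ ^ 2 - g (x + t • v)
  have hψ : ∀ t, HasDerivAt ψ (⟪G x, v⟫ + L * t * ‖v‖ ^ 2 - ⟪G (x + t • v), v⟫) t := by
    intro t
    have hquad := ((hasDerivAt_id t).mul_const ⟪G x, v⟫).add
      (((hasDerivAt_pow 2 t).const_mul ((L : ℝ) / 2)).mul_const (‖v‖ ^ 2))
    refine (hquad.sub (hG (x + t • v)).hasDerivAt_comp_add_smul).congr_deriv ?_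
    simp only [one_mul, Nat.cast_ofNat]
    ring
  have hmono : MonotoneOn ψ (Icc 0 1) := by
    refine monotoneOn_of_deriv_nonneg (convex_Icc 0 1)
      (fun t _ => (hψ t).continuousAt.continuousWithinAt)
      (fun t _ => (hψ t).differentiableAt.differentiableWithinAt) fun t ht => ?_
    rw [interior_Icc] at ht
    have hgap : ⟪G (x + t • v) - G x, v⟫ ≤ L * t * ‖v‖ ^ 2 :=
      calc ⟪G (x + t • v) - G x, v⟫ ≤ ‖G (x + t • v) - G x‖ * ‖v‖ := real_inner_le_norm _ _
        _ ≤ L * ‖t • v‖ * ‖v‖ := by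
          gcongr
          simpa [dist_eq_norm] using hL.dist_le_mul (x + t • v) x
        _ = L * t * ‖v‖ ^ 2 := by rw [norm_smul, Real.norm_of_nonneg ht.1.le]; ring
    rw [inner_sub_left] at hgap
    rw [(hψ t).deriv]
    linarith
  have h01 := hmono (left_mem_Icc.2 zero_le_one) (right_mem_Icc.2 zero_le_one) zero_le_one
  simp only [ψ, zero_mul, zero_smul, add_zero, one_mul, one_pow, one_smul, ne_eq,
    OfNat.ofNat_ne_zero, not_false_eq_true, zero_pow, mul_zero] at h01
  linarith

theorem LipschitzWith.sq_norm_le_two_mul_sub_of_forall_le {L : NNReal} (hL : LipschitzWith L G)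
    (hG : ∀ z, HasGradientAt g (G z) z) {y : E} (hmin : ∀ z, g y ≤ g z) (x : E) :
    ‖G x‖ ^ 2 ≤ 2 * L * (g x - g y) := by
  rcases eq_zero_or_pos L with rfl | hLpos
  · have hGy : G y = 0 := (InnerProductSpace.toDual ℝ E).map_eq_zero_iff.1
      (IsLocalMin.hasFDerivAt_eq_zero (Filter.Eventually.of_forall hmin) (hG y).hasFDerivAt)
    have hGx : G x = G y := by simpa using hL.dist_le_mul x y
    simp [hGx, hGy]
  have hLR : (0 : ℝ) < L := hLpos
  have hstep := hL.image_add_le_of_hasGradientAt hG x (-((L : ℝ)⁻¹ • G x))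
  rw [inner_neg_right, real_inner_smul_right, real_inner_self_eq_norm_sq, norm_neg, norm_smul,
    Real.norm_of_nonneg (inv_nonneg.2 hLR.le)] at hstep
  have hbelow := (hmin _).trans hstep
  have hdecrease : (L : ℝ)⁻¹ / 2 * ‖G x‖ ^ 2 ≤ g x - g y := by
    field_simp at hbelow ⊢
    nlinarith
  calc ‖G x‖ ^ 2 = 2 * L * ((L : ℝ)⁻¹ / 2 * ‖G x‖ ^ 2) := by field_simp
    _ ≤ 2 * L * (g x - g y) := by gcongr

theorem ConvexOn.sq_norm_gradient_sub_le {L : NNReal} (hconv : ConvexOn ℝ univ g)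
    (hg : Differentiable ℝ g) (hL : LipschitzWith L (∇ g)) (x y : E) :
    ‖∇ g x - ∇ g y‖ ^ 2 ≤ 2 * L * (g x - g y - ⟪∇ g y, x - y⟫) := by
  set h : E → ℝ := fun z => g z - ⟪∇ g y, z⟫
  have hh : ∀ z, HasGradientAt h (∇ g z - ∇ g y) z := fun z => by
    rw [hasGradientAt_iff_hasFDerivAt, map_sub]
    exact (hg z).hasGradientAt.hasFDerivAt.sub (InnerProductSpace.toDual ℝ E (∇ g y)).hasFDerivAt
  have hmin : ∀ z, h y ≤ h z := fun z => by
    have := hconv.add_inner_le_of_hasGradientAt (hg y).hasGradientAt z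
    simp only [h, inner_sub_right] at this ⊢
    linarith
  have := (by simpa using hL.sub (LipschitzWith.const (∇ g y)) :
    LipschitzWith L fun z => ∇ g z - ∇ g y).sq_norm_le_two_mul_sub_of_forall_le hh hmin x
  convert this using 2
  simp only [h, inner_sub_right]
  ring

end LipschitzGradient

theorem svrg_gradient_variance_bound_general
    {Ω : Type*} [MeasurableSpace Ω] (μ : Measure Ω)
    {n : ℕ} (f : Ω → EuclideanSpace ℝ (Fin n) → ℝ)
    (hconv : ∀ η, ConvexOn ℝ Set.univ (f η))
    (hdiff : ∀ η, Differentiable ℝ (f η))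
    (L : Ω → NNReal) (hLip : ∀ η, LipschitzWith (L η) (gradient (f η)))
    (Lsup : NNReal) (hLsup : ∀ η, L η ≤ Lsup)
    (hfint : ∀ x, Integrable (fun η => f η x) μ)
    (hgint : ∀ x, Integrable (fun η => gradient (f η) x) μ)
    (F : EuclideanSpace ℝ (Fin n) → ℝ) (hF : ∀ x, F x = ∫ η, f η x ∂μ)
    (hgrad : ∀ x, gradient F x = ∫ η, gradient (f η) x ∂μ)
    (xstar : EuclideanSpace ℝ (Fin n)) (hxstar : ∀ y, F xstar ≤ F y) :
    ∀ x : EuclideanSpace ℝ (Fin n),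
      ∫ η, ‖gradient (f η) x - gradient (f η) xstar‖ ^ 2 ∂μ
        ≤ 2 * (Lsup : ℝ) * (F x - F xstar) := by
  intro x
  have hcrit : ∇ F xstar = 0 := by
    rw [gradient, IsLocalMin.fderiv_eq_zero (Filter.Eventually.of_forall hxstar), map_zero]
  have hpointwise : ∀ η, ‖∇ (f η) x - ∇ (f η) xstar‖ ^ 2
      ≤ 2 * Lsup * (f η x - f η xstar - ⟪∇ (f η) xstar, x - xstar⟫) := fun η =>
    (hconv η).sq_norm_gradient_sub_le (hdiff η) ((hLip η).weaken (hLsup η)) x xstar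
  have hint_sub : Integrable (fun η => f η x - f η xstar) μ := (hfint x).sub (hfint xstar)
  have hint : Integrable (fun η => f η x - f η xstar - ⟪∇ (f η) xstar, x - xstar⟫) μ :=
    hint_sub.sub ((hgint xstar).inner_const _)
  have hmean : ∫ η, (f η x - f η xstar - ⟪∇ (f η) xstar, x - xstar⟫) ∂μ = F x - F xstar := by
    simp_rw [real_inner_comm (x - xstar)]
    rw [integral_sub hint_sub ((hgint xstar).const_inner _),
      integral_sub (hfint x) (hfint xstar), integral_inner (hgint xstar), ← hgrad, hcrit,
      inner_zero_right, sub_zero, hF, hF]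
  calc ∫ η, ‖∇ (f η) x - ∇ (f η) xstar‖ ^ 2 ∂μ
      ≤ ∫ η, 2 * Lsup * (f η x - f η xstar - ⟪∇ (f η) xstar, x - xstar⟫) ∂μ :=
        integral_mono_of_nonneg (ae_of_all _ fun _ => by positivity) (hint.const_mul _)
          (ae_of_all _ hpointwise)
    _ = 2 * Lsup * (F x - F xstar) := by rw [integral_const_mul, hmean]

/-- **Variance bound for stochastic gradients at the optimum (Lemma A.2).**
Let `(Ω, μ)` be a probability space and, for each `η ∈ Ω`, let
`f_η : ℝⁿ → ℝ` be convex and differentiable with `∇f_η` Lipschitz with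
constant `L_η ≤ L_sup < ∞`.  Let `f(x) = ∫ f_η(x) dμ(η)` with
`∇f(x) = ∫ ∇f_η(x) dμ(η)`, and let `x*` be a global minimizer of `f`.  Then
for every `x`, `∫ ‖∇f_η(x) − ∇f_η(x*)‖² dμ(η) ≤ 2 L_sup (f(x) − f(x*))`. -/
theorem svrg_gradient_variance_bound
    {Ω : Type*} [MeasurableSpace Ω] (μ : Measure Ω) [IsProbabilityMeasure μ]
    {n : ℕ} (f : Ω → EuclideanSpace ℝ (Fin n) → ℝ)
    (hconv : ∀ η, ConvexOn ℝ Set.univ (f η))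
    (hdiff : ∀ η, Differentiable ℝ (f η))
    (L : Ω → NNReal) (hLip : ∀ η, LipschitzWith (L η) (gradient (f η)))
    (Lsup : NNReal) (hLsup : ∀ η, L η ≤ Lsup)
    (hfint : ∀ x, Integrable (fun η => f η x) μ)
    (hgint : ∀ x, Integrable (fun η => gradient (f η) x) μ)
    (F : EuclideanSpace ℝ (Fin n) → ℝ) (hF : ∀ x, F x = ∫ η, f η x ∂μ)
    (hgrad : ∀ x, gradient F x = ∫ η, gradient (f η) x ∂μ)
    (xstar : EuclideanSpace ℝ (Fin n)) (hxstar : ∀ y, F xstar ≤ F y) :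
    ∀ x : EuclideanSpace ℝ (Fin n),
      ∫ η, ‖gradient (f η) x - gradient (f η) xstar‖ ^ 2 ∂μ
        ≤ 2 * (Lsup : ℝ) * (F x - F xstar) :=
  svrg_gradient_variance_bound_general μ f hconv hdiff L hLip Lsup hLsup hfint hgint F hF hgrad
    xstar hxstar
end

section
/- For all x, x̃ ∈ ℝⁿ, ∫_Ω ‖∇f_η(x) − ∇f_η(x̃) + ∇f(x̃)‖² dμ(η) ≤ 4 L_sup (f(x) − 2 f(x*) + f(x̃)). (Equivalently, if η is a random variable with law μ and v = ∇f_η(x) − ∇f_η(x̃) + ∇f(x̃), then E‖v‖² ≤ 4L_sup(f(x) − 2f(x*) + f(x̃)).) -/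
open MeasureTheory Set
open scoped RealInnerProductSpace NNReal

/-!
Write `a η = ∇f_η x - ∇f_η x*` and `b η = ∇f_η x̃ - ∇f_η x*`. Since `∇F x* = 0`, the mean of `b`
is `∇F x̃`, so the variance-reduced gradient is `a - (b - 𝔼 b)` and its second moment is at most
`2 𝔼‖a‖² + 2 𝔼‖b - 𝔼 b‖² ≤ 2 𝔼‖a‖² + 2 𝔼‖b‖²`. A convex function with `L`-Lipschitz gradient is
cocoercive in the Bregman form `‖∇g z - ∇g y‖² ≤ 2L (g z - g y - ⟪∇g y, z - y⟫)`; averaging this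
over `η` at `y = x*` kills the inner product term, because `∇F x* = 0`, and leaves
`𝔼‖a‖² ≤ 2L (F x - F x*)`, and likewise `𝔼‖b‖² ≤ 2L (F x̃ - F x*)`.
-/

theorem ConvexOn.add_fderiv_sub_le {E : Type*} [NormedAddCommGroup E] [NormedSpace ℝ E]
    {f : E → ℝ} {f' : E →L[ℝ] ℝ} {s : Set E} {x y : E}
    (hf : ConvexOn ℝ s f) (hx : x ∈ s) (hy : y ∈ s) (hf' : HasFDerivAt f f' x) :
    f x + f' (y - x) ≤ f y := by
  set γ : ℝ →ᵃ[ℝ] E := AffineMap.lineMap x y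
  have hγ : HasDerivAt (f ∘ γ) (f' (y - x)) 0 := by
    have hline : HasDerivAt γ (y - x) 0 := AffineMap.hasDerivAt_lineMap
    exact (by simpa [γ] using hf' : HasFDerivAt f f' (γ 0)).comp_hasDerivAt 0 hline
  have := (hf.comp_affineMap γ).le_slope_of_hasDerivAt (x := 0) (y := 1)
    (by simpa [γ] using hx) (by simpa [γ] using hy) zero_lt_one hγ
  simp only [slope_def_field, Function.comp_apply, γ, AffineMap.lineMap_apply_one,
    AffineMap.lineMap_apply_zero, sub_zero, div_one] at this
  linarith

section Gradient

variable {E : Type*} [NormedAddCommGroup E] [InnerProductSpace ℝ E] [CompleteSpace E]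
  {f : E → ℝ} {C : ℝ≥0}

theorem apply_add_le_of_lipschitzWith_gradient (hf : Differentiable ℝ f)
    (hLip : LipschitzWith C (gradient f)) (x d : E) :
    f (x + d) ≤ f x + ⟪gradient f x, d⟫ + C / 2 * ‖d‖ ^ 2 := by
  set φ : ℝ → ℝ := fun t => f (x + t • d) - t * ⟪gradient f x, d⟫
  set B : ℝ → ℝ := fun t => f x + C / 2 * ‖d‖ ^ 2 * t ^ 2
  have hφ : ∀ t, HasDerivAt φ ⟪gradient f (x + t • d) - gradient f x, d⟫ t := by
    intro t
    have hline : HasDerivAt (fun s : ℝ => x + s • d) d t := by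
      simpa using ((hasDerivAt_id t).smul_const d).const_add x
    have := ((hf _).hasGradientAt.hasFDerivAt.comp_hasDerivAt t hline).sub
      ((hasDerivAt_id t).mul_const ⟪gradient f x, d⟫)
    rw [inner_sub_left]
    exact this.congr_deriv (by simp)
  have hB : ∀ t, HasDerivAt B (C * ‖d‖ ^ 2 * t) t := by
    intro t
    exact (((hasDerivAt_pow 2 t).const_mul (C / 2 * ‖d‖ ^ 2)).const_add (f x)).congr_deriv
      (by push_cast; ring)
  have hslope : ∀ t ∈ Ico (0 : ℝ) 1,
      ⟪gradient f (x + t • d) - gradient f x, d⟫ ≤ C * ‖d‖ ^ 2 * t := fun t ht =>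
    calc ⟪gradient f (x + t • d) - gradient f x, d⟫
        ≤ ‖gradient f (x + t • d) - gradient f x‖ * ‖d‖ := real_inner_le_norm _ _
      _ ≤ C * ‖t • d‖ * ‖d‖ := by
          gcongr
          simpa [dist_eq_norm] using hLip.dist_le_mul (x + t • d) x
      _ = C * ‖d‖ ^ 2 * t := by
          rw [norm_smul, Real.norm_of_nonneg ht.1]; ring
  have := image_le_of_deriv_right_le_deriv_boundary (a := 0) (b := 1)
    (fun t _ => (hφ t).continuousAt.continuousWithinAt) (fun t _ => (hφ t).hasDerivWithinAt)
    (by simp [φ, B]) (fun t _ => (hB t).continuousAt.continuousWithinAt)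
    (fun t _ => (hB t).hasDerivWithinAt) hslope (right_mem_Icc.2 zero_le_one)
  simp only [φ, B, one_smul, one_mul, one_pow, mul_one] at this
  linarith

theorem ConvexOn.norm_gradient_sub_sq_le (hconv : ConvexOn ℝ univ f) (hf : Differentiable ℝ f)
    (hLip : LipschitzWith C (gradient f)) (x y : E) :
    ‖gradient f x - gradient f y‖ ^ 2 ≤ 2 * C * (f x - f y - ⟪gradient f y, x - y⟫) := by
  have hsupport : ∀ z, f y + ⟪gradient f y, z - y⟫ ≤ f z := fun z => by
    simpa only [inner_gradient_left] using
      hconv.add_fderiv_sub_le (mem_univ y) (mem_univ z) (hf y).hasFDerivAt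
  set u := gradient f x - gradient f y
  rcases C.coe_nonneg.eq_or_lt with hC | hC
  · have hu : u = 0 := by
      simpa [u, ← hC, sub_eq_zero] using hLip.dist_le_mul x y
    simp [hu, ← hC]
  -- Squeeze `f (x + d)` between the descent lemma at `x` and the supporting hyperplane at `y`,
  -- for the gradient step `d = -u / C`.
  set d := -((C : ℝ)⁻¹ • u)
  have key : f y + ⟪gradient f y, x - y⟫ - f x ≤ ⟪u, d⟫ + C / 2 * ‖d‖ ^ 2 := by
    have := apply_add_le_of_lipschitzWith_gradient hf hLip x d
    have := hsupport (x + d)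
    rw [add_sub_right_comm, inner_add_right] at this
    rw [inner_sub_left]
    linarith
  rw [inner_neg_right, real_inner_smul_right, real_inner_self_eq_norm_sq, norm_neg, norm_smul,
    Real.norm_of_nonneg (inv_nonneg.2 hC.le), mul_pow] at key
  field_simp at key
  nlinarith

end Gradient

section Integral

variable {Ω E : Type*} [MeasurableSpace Ω] {μ : Measure Ω}

theorem integral_norm_sub_sq_le [NormedAddCommGroup E] {a c : Ω → E} (ha : MemLp a 2 μ)
    (hc : MemLp c 2 μ) :
    ∫ η, ‖a η - c η‖ ^ 2 ∂μ ≤ 2 * ∫ η, ‖a η‖ ^ 2 ∂μ + 2 * ∫ η, ‖c η‖ ^ 2 ∂μ := by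
  have hpt : ∀ η, ‖a η - c η‖ ^ 2 ≤ 2 * ‖a η‖ ^ 2 + 2 * ‖c η‖ ^ 2 := fun η =>
    calc ‖a η - c η‖ ^ 2 ≤ (‖a η‖ + ‖c η‖) ^ 2 := by gcongr; exact norm_sub_le _ _
      _ ≤ 2 * ‖a η‖ ^ 2 + 2 * ‖c η‖ ^ 2 := by linarith [add_sq_le (a := ‖a η‖) (b := ‖c η‖)]
  have ha2 := (ha.integrable_norm_pow two_ne_zero).const_mul 2
  have hc2 := (hc.integrable_norm_pow two_ne_zero).const_mul 2
  rw [← integral_const_mul, ← integral_const_mul, ← integral_add ha2 hc2]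
  exact integral_mono ((ha.sub hc).integrable_norm_pow two_ne_zero) (ha2.add hc2) hpt

theorem integral_norm_sub_integral_sq [NormedAddCommGroup E] [InnerProductSpace ℝ E]
    [CompleteSpace E] [IsProbabilityMeasure μ] {b : Ω → E} (hb : MemLp b 2 μ) :
    ∫ η, ‖b η - ∫ ζ, b ζ ∂μ‖ ^ 2 ∂μ = ∫ η, ‖b η‖ ^ 2 ∂μ - ‖∫ η, b η ∂μ‖ ^ 2 := by
  set m := ∫ η, b η ∂μ
  have hb1 := hb.integrable one_le_two
  have hb2 := hb.integrable_norm_pow two_ne_zero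
  have hinner := (hb1.const_inner m).const_mul (2 : ℝ)
  have hexpand : ∀ η, ‖b η - m‖ ^ 2 = ‖b η‖ ^ 2 - 2 * ⟪m, b η⟫ + ‖m‖ ^ 2 := fun η => by
    rw [norm_sub_sq_real, real_inner_comm]
  simp_rw [hexpand]
  have hdiff : Integrable (fun η => ‖b η‖ ^ 2 - 2 * ⟪m, b η⟫) μ := hb2.sub hinner
  rw [integral_add hdiff (integrable_const _), integral_sub hb2 hinner,
    integral_const_mul, integral_inner hb1, real_inner_self_eq_norm_sq]
  simp only [integral_const, probReal_univ, smul_eq_mul, one_mul]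
  ring

theorem integral_norm_gradient_sub_sq_le [NormedAddCommGroup E] [InnerProductSpace ℝ E]
    [CompleteSpace E] {f : Ω → E → ℝ} {C : ℝ≥0}
    (hconv : ∀ η, ConvexOn ℝ univ (f η)) (hdiff : ∀ η, Differentiable ℝ (f η))
    (hLip : ∀ η, LipschitzWith C (gradient (f η))) {x y : E}
    (hfx : Integrable (fun η => f η x) μ) (hfy : Integrable (fun η => f η y) μ)
    (hgx : AEStronglyMeasurable (fun η => gradient (f η) x) μ)
    (hgy : Integrable (fun η => gradient (f η) y) μ) :
    MemLp (fun η => gradient (f η) x - gradient (f η) y) 2 μ ∧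
      ∫ η, ‖gradient (f η) x - gradient (f η) y‖ ^ 2 ∂μ ≤
        2 * C * (∫ η, f η x ∂μ - ∫ η, f η y ∂μ - ⟪∫ η, gradient (f η) y ∂μ, x - y⟫) := by
  have hbound : ∀ η, ‖gradient (f η) x - gradient (f η) y‖ ^ 2 ≤
      2 * C * (f η x - f η y - ⟪gradient (f η) y, x - y⟫) := fun η =>
    (hconv η).norm_gradient_sub_sq_le (hdiff η) (hLip η) x y
  have hinner : Integrable (fun η => ⟪gradient (f η) y, x - y⟫) μ := hgy.inner_const (x - y)
  have hgap : Integrable (fun η => f η x - f η y) μ := hfx.sub hfy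
  have hmajor : Integrable (fun η => 2 * C * (f η x - f η y - ⟪gradient (f η) y, x - y⟫)) μ :=
    (hgap.sub hinner).const_mul _
  have hsq : Integrable (fun η => ‖gradient (f η) x - gradient (f η) y‖ ^ 2) μ :=
    hmajor.mono' ((hgx.sub hgy.1).norm.pow 2)
      (ae_of_all _ fun η => by rw [Real.norm_of_nonneg (by positivity)]; exact hbound η)
  refine ⟨(memLp_two_iff_integrable_sq_norm (hgx.sub hgy.1)).2 hsq, ?_⟩
  calc ∫ η, ‖gradient (f η) x - gradient (f η) y‖ ^ 2 ∂μ
      ≤ ∫ η, 2 * C * (f η x - f η y - ⟪gradient (f η) y, x - y⟫) ∂μ :=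
        integral_mono hsq hmajor hbound
    _ = 2 * C * (∫ η, f η x ∂μ - ∫ η, f η y ∂μ - ⟪∫ η, gradient (f η) y ∂μ, x - y⟫) := by
        simp_rw [integral_const_mul, integral_sub hgap hinner, integral_sub hfx hfy,
          real_inner_comm (x - y), integral_inner hgy]

end Integral

/-- **Second moment bound for the SVRG variance-reduced stochastic gradient
(Corollary A.3).**
Let `(Ω, μ)` be a probability space and, for each `η ∈ Ω`, let
`f_η : ℝⁿ → ℝ` be convex and differentiable with `∇f_η` Lipschitz with
constant `L_η ≤ L_sup < ∞`.  Let `f(x) = ∫ f_η(x) dμ(η)` with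
`∇f(x) = ∫ ∇f_η(x) dμ(η)`, and let `x*` be a global minimizer of `f`.  Then
for all `x, x̃`, with `v(η) = ∇f_η(x) − ∇f_η(x̃) + ∇f(x̃)` one has
`∫ ‖v(η)‖² dμ(η) ≤ 4 L_sup (f(x) − 2 f(x*) + f(x̃))`. -/
theorem svrg_variance_reduced_gradient_bound
    {Ω : Type*} [MeasurableSpace Ω] (μ : Measure Ω) [IsProbabilityMeasure μ]
    {n : ℕ} (f : Ω → EuclideanSpace ℝ (Fin n) → ℝ)
    (hconv : ∀ η, ConvexOn ℝ Set.univ (f η))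
    (hdiff : ∀ η, Differentiable ℝ (f η))
    (L : Ω → NNReal) (hLip : ∀ η, LipschitzWith (L η) (gradient (f η)))
    (Lsup : NNReal) (hLsup : ∀ η, L η ≤ Lsup)
    (hfint : ∀ x, Integrable (fun η => f η x) μ)
    (hgint : ∀ x, Integrable (fun η => gradient (f η) x) μ)
    (F : EuclideanSpace ℝ (Fin n) → ℝ) (hF : ∀ x, F x = ∫ η, f η x ∂μ)
    (hgrad : ∀ x, gradient F x = ∫ η, gradient (f η) x ∂μ)
    (xstar : EuclideanSpace ℝ (Fin n)) (hxstar : ∀ y, F xstar ≤ F y) :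
    ∀ x xt : EuclideanSpace ℝ (Fin n),
      ∫ η, ‖gradient (f η) x - gradient (f η) xt + gradient F xt‖ ^ 2 ∂μ
        ≤ 4 * (Lsup : ℝ) * (F x - 2 * F xstar + F xt) := by
  intro x xt
  have hgrad_star : gradient F xstar = 0 := by
    rw [gradient, IsLocalMin.fderiv_eq_zero (.of_forall hxstar), map_zero]
  have hLip' : ∀ η, LipschitzWith Lsup (gradient (f η)) := fun η => (hLip η).weaken (hLsup η)
  have hmoment : ∀ z, MemLp (fun η => gradient (f η) z - gradient (f η) xstar) 2 μ ∧
      ∫ η, ‖gradient (f η) z - gradient (f η) xstar‖ ^ 2 ∂μ ≤ 2 * Lsup * (F z - F xstar) := by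
    intro z
    simpa [hF, ← hgrad, hgrad_star] using integral_norm_gradient_sub_sq_le hconv hdiff hLip'
      (hfint z) (hfint xstar) (hgint z).1 (hgint xstar)
  obtain ⟨ha, ha_le⟩ := hmoment x
  obtain ⟨hb, hb_le⟩ := hmoment xt
  have hmean : ∫ η, (gradient (f η) xt - gradient (f η) xstar) ∂μ = gradient F xt := by
    rw [integral_sub (hgint xt) (hgint xstar), ← hgrad, ← hgrad, hgrad_star, sub_zero]
  have hv : ∀ η, gradient (f η) x - gradient (f η) xt + gradient F xt =
      (gradient (f η) x - gradient (f η) xstar) -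
        ((gradient (f η) xt - gradient (f η) xstar) -
          ∫ ζ, (gradient (f ζ) xt - gradient (f ζ) xstar) ∂μ) := fun η => by
    rw [hmean]; abel
  calc ∫ η, ‖gradient (f η) x - gradient (f η) xt + gradient F xt‖ ^ 2 ∂μ
      ≤ 2 * ∫ η, ‖gradient (f η) x - gradient (f η) xstar‖ ^ 2 ∂μ +
          2 * ∫ η, ‖(gradient (f η) xt - gradient (f η) xstar) -
            ∫ ζ, (gradient (f ζ) xt - gradient (f ζ) xstar) ∂μ‖ ^ 2 ∂μ := by
        simp_rw [hv]
        exact integral_norm_sub_sq_le ha (hb.sub (memLp_const _))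
    _ ≤ 4 * Lsup * (F x - 2 * F xstar + F xt) := by
        rw [integral_norm_sub_integral_sq hb]
        linarith [sq_nonneg ‖∫ η, (gradient (f η) xt - gradient (f η) xstar) ∂μ‖]
end
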